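/- (Equivalence of the δ-RPDE with the RPDE under exponential substitution.) Fix integers n, m and δ ∈ ℝ with δ ≠ 0. Let U be a four times continuously differentiable real function on an open set D ⊆ ℝ² where α ≠ β, ∂U/∂α ≠ 0 and ∂U/∂β ≠ 0, and define Ũ := exp(2δU)/(2δ). Then U satisfies the δ-RPDE R(α,β,U;n,m) + 2δ²·U_α·U_β·(2·U_{αβ} − (U_α − U_β)/(α−β)) = 0 on D if and only if Ũ satisfies R(α,β,Ũ;n,m) = 0 on D. -/

import Mathlib

/-- Partial derivative with respect to the first variable. -/
noncomputable def pda (f : ℝ × ℝ → ℝ) (p : ℝ × ℝ) : ℝ :=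
  deriv (fun x => f (x, p.2)) p.1

/-- Partial derivative with respect to the second variable. -/
noncomputable def pdb (f : ℝ × ℝ → ℝ) (p : ℝ × ℝ) : ℝ :=
  deriv (fun y => f (p.1, y)) p.2

/-- The RPDE expression R(α,β,U;n,m). -/
noncomputable def Rexpr (n m : ℤ) (U : ℝ × ℝ → ℝ) (p : ℝ × ℝ) : ℝ :=
  let s := p.1 - p.2
  let Ua := pda U p
  let Ub := pdb U p
  let Uaa := pda (pda U) p
  let Uab := pdb (pda U) p
  let Ubb := pdb (pdb U) p
  let Uaab := pdb (pda (pda U)) p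
  let Uabb := pdb (pdb (pda U)) p
  let Uaabb := pdb (pdb (pda (pda U))) p ;
  (-Uaabb
    + Uaab * (1 / s + Ubb / Ub + Uab / Ua)
    + Uabb * (1 / (-s) + Uaa / Ua + Uab / Ub)
    - Uaa * Ubb * Uab / (Ua * Ub)
    + Uaa * ((n : ℝ) ^ 2 * Ub ^ 2 / (s ^ 2 * Ua ^ 2) - Uab / (s * Ua) - Uab ^ 2 / Ua ^ 2)
    + Ubb * ((m : ℝ) ^ 2 * Ua ^ 2 / (s ^ 2 * Ub ^ 2) + Uab / (s * Ub) - Uab ^ 2 / Ub ^ 2)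
    + ((n : ℝ) ^ 2 / (2 * s ^ 3)) * (Ub / Ua) * (Ua + Ub + 2 * (-s) * Uab)
    - ((m : ℝ) ^ 2 / (2 * s ^ 3)) * (Ua / Ub) * (Ua + Ub + 2 * s * Uab)
    + (1 / (2 * s)) * Uab ^ 2 * (1 / Ua - 1 / Ub))

/-!
Write `E = exp (2δU)`. Each partial derivative of `Ũ` occurring in `R` is `E` times a polynomial
in `δ` and the partial derivatives of `U`, e.g. `Ũ_α = E U_α` and `Ũ_αα = E (2δ U_α² + U_αα)`.
The expression `R` is homogeneous of degree one in the jet `(U_α, …, U_ααββ)`, so `R(Ũ) = E · R(J)`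
for this shifted jet `J`, and a direct computation gives
`R(J) = R(U) + 2δ² U_α U_β (2 U_αβ - (U_α - U_β)/(α - β))`. Since `E ≠ 0` the two equations agree.
-/

open Set Real

section PartialDerivatives

variable {f g U : ℝ × ℝ → ℝ} {p : ℝ × ℝ} {D : Set (ℝ × ℝ)}

theorem hasDerivAt_pda (hf : DifferentiableAt ℝ f p) :
    HasDerivAt (fun x => f (x, p.2)) (pda f p) p.1 :=
  (hf.comp p.1 (by fun_prop : DifferentiableAt ℝ (fun x : ℝ => (x, p.2)) p.1)).hasDerivAt

theorem hasDerivAt_pdb (hf : DifferentiableAt ℝ f p) :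
    HasDerivAt (fun y => f (p.1, y)) (pdb f p) p.2 :=
  (hf.comp p.2 (by fun_prop : DifferentiableAt ℝ (fun y : ℝ => (p.1, y)) p.2)).hasDerivAt

theorem pda_eq_fderiv (hf : DifferentiableAt ℝ f p) : pda f p = fderiv ℝ f p (1, 0) :=
  (hasDerivAt_pda hf).unique <| hf.hasFDerivAt.comp_hasDerivAt_of_eq p.1
    ((hasDerivAt_id p.1).prodMk (hasDerivAt_const p.1 p.2)) rfl

theorem pdb_eq_fderiv (hf : DifferentiableAt ℝ f p) : pdb f p = fderiv ℝ f p (0, 1) :=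
  (hasDerivAt_pdb hf).unique <| hf.hasFDerivAt.comp_hasDerivAt_of_eq p.2
    ((hasDerivAt_const p.2 p.1).prodMk (hasDerivAt_id p.2)) rfl

theorem pda_congr_of_eqOn (hD : IsOpen D) (hfg : EqOn f g D) (hp : p ∈ D) :
    pda f p = pda g p :=
  ((hfg.eventuallyEq_of_mem (hD.mem_nhds hp)).comp_tendsto
    ((continuous_id.prodMk continuous_const).tendsto' p.1 p rfl)).deriv_eq

theorem pdb_congr_of_eqOn (hD : IsOpen D) (hfg : EqOn f g D) (hp : p ∈ D) :
    pdb f p = pdb g p :=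
  ((hfg.eventuallyEq_of_mem (hD.mem_nhds hp)).comp_tendsto
    ((continuous_const.prodMk continuous_id).tendsto' p.2 p rfl)).deriv_eq

theorem differentiableAt_of_contDiffOn {n : WithTop ℕ∞} (hD : IsOpen D)
    (hf : ContDiffOn ℝ n f D) (hn : n ≠ 0) (hp : p ∈ D) : DifferentiableAt ℝ f p :=
  (hf.contDiffAt (hD.mem_nhds hp)).differentiableAt hn

theorem contDiffOn_pda {m n : WithTop ℕ∞} (hD : IsOpen D) (hf : ContDiffOn ℝ n f D)
    (hmn : m + 1 ≤ n) : ContDiffOn ℝ m (pda f) D :=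
  ((hf.fderiv_of_isOpen hD hmn).clm_apply contDiffOn_const).congr fun _ hq =>
    pda_eq_fderiv (differentiableAt_of_contDiffOn hD hf
      (ne_bot_of_le_ne_bot one_ne_zero (le_add_self.trans hmn)) hq)

theorem contDiffOn_pdb {m n : WithTop ℕ∞} (hD : IsOpen D) (hf : ContDiffOn ℝ n f D)
    (hmn : m + 1 ≤ n) : ContDiffOn ℝ m (pdb f) D :=
  ((hf.fderiv_of_isOpen hD hmn).clm_apply contDiffOn_const).congr fun _ hq =>
    pdb_eq_fderiv (differentiableAt_of_contDiffOn hD hf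
      (ne_bot_of_le_ne_bot one_ne_zero (le_add_self.trans hmn)) hq)

theorem pda_of_eqOn_exp_mul {c g' : ℝ} (hD : IsOpen D) (hp : p ∈ D)
    (hfg : EqOn f (fun q => exp (c * U q) * g q) D) (hU : DifferentiableAt ℝ U p)
    (hg : HasDerivAt (fun x => g (x, p.2)) g' p.1) :
    pda f p = exp (c * U p) * (c * pda U p * g p + g') := by
  rw [pda_congr_of_eqOn hD hfg hp]
  exact ((((hasDerivAt_pda hU).const_mul c).exp).mul hg).deriv.trans (by ring)

theorem pdb_of_eqOn_exp_mul {c g' : ℝ} (hD : IsOpen D) (hp : p ∈ D)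
    (hfg : EqOn f (fun q => exp (c * U q) * g q) D) (hU : DifferentiableAt ℝ U p)
    (hg : HasDerivAt (fun y => g (p.1, y)) g' p.2) :
    pdb f p = exp (c * U p) * (c * pdb U p * g p + g') := by
  rw [pdb_congr_of_eqOn hD hfg hp]
  exact ((((hasDerivAt_pdb hU).const_mul c).exp).mul hg).deriv.trans (by ring)

end PartialDerivatives

noncomputable def rpde (n m : ℤ) (s ua ub uaa uab ubb uaab uabb uaabb : ℝ) : ℝ :=
  -uaabb
    + uaab * (1 / s + ubb / ub + uab / ua)
    + uabb * (1 / (-s) + uaa / ua + uab / ub)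
    - uaa * ubb * uab / (ua * ub)
    + uaa * ((n : ℝ) ^ 2 * ub ^ 2 / (s ^ 2 * ua ^ 2) - uab / (s * ua) - uab ^ 2 / ua ^ 2)
    + ubb * ((m : ℝ) ^ 2 * ua ^ 2 / (s ^ 2 * ub ^ 2) + uab / (s * ub) - uab ^ 2 / ub ^ 2)
    + ((n : ℝ) ^ 2 / (2 * s ^ 3)) * (ub / ua) * (ua + ub + 2 * (-s) * uab)
    - ((m : ℝ) ^ 2 / (2 * s ^ 3)) * (ua / ub) * (ua + ub + 2 * s * uab)
    + (1 / (2 * s)) * uab ^ 2 * (1 / ua - 1 / ub)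

theorem Rexpr_eq_rpde (n m : ℤ) (U : ℝ × ℝ → ℝ) (p : ℝ × ℝ) :
    Rexpr n m U p = rpde n m (p.1 - p.2) (pda U p) (pdb U p) (pda (pda U) p) (pdb (pda U) p)
      (pdb (pdb U) p) (pdb (pda (pda U)) p) (pdb (pdb (pda U)) p) (pdb (pdb (pda (pda U))) p) :=
  rfl

theorem rpde_mul (n m : ℤ) {c : ℝ} (hc : c ≠ 0) (s ua ub uaa uab ubb uaab uabb uaabb : ℝ) :
    rpde n m s (c * ua) (c * ub) (c * uaa) (c * uab) (c * ubb) (c * uaab) (c * uabb) (c * uaabb)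
      = c * rpde n m s ua ub uaa uab ubb uaab uabb uaabb := by
  unfold rpde
  field_simp

theorem rpde_exp_shift (n m : ℤ) (δ : ℝ) {s ua ub : ℝ} (hs : s ≠ 0) (ha : ua ≠ 0) (hb : ub ≠ 0)
    (uaa uab ubb uaab uabb uaabb : ℝ) :
    rpde n m s ua ub (2 * δ * ua ^ 2 + uaa) (2 * δ * ua * ub + uab) (2 * δ * ub ^ 2 + ubb)
        (4 * δ ^ 2 * ua ^ 2 * ub + 2 * δ * uaa * ub + 4 * δ * ua * uab + uaab)
        (4 * δ ^ 2 * ua * ub ^ 2 + 4 * δ * ub * uab + 2 * δ * ua * ubb + uabb)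
        (8 * δ ^ 3 * ua ^ 2 * ub ^ 2 + 4 * δ ^ 2 * uaa * ub ^ 2 + 16 * δ ^ 2 * ua * ub * uab
          + 4 * δ ^ 2 * ua ^ 2 * ubb + 4 * δ * ub * uaab + 2 * δ * uaa * ubb + 4 * δ * uab ^ 2
          + 4 * δ * ua * uabb + uaabb)
      = rpde n m s ua ub uaa uab ubb uaab uabb uaabb
        + 2 * δ ^ 2 * ua * ub * (2 * uab - (ua - ub) / s) := by
  unfold rpde
  field_simp
  ring

noncomputable def expSubst (δ : ℝ) (U : ℝ × ℝ → ℝ) : ℝ × ℝ → ℝ :=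
  fun q => exp (2 * δ * U q) / (2 * δ)

section ExpSubst

variable {δ : ℝ} {U : ℝ × ℝ → ℝ} {D : Set (ℝ × ℝ)} {p : ℝ × ℝ}

theorem pda_expSubst (hδ : δ ≠ 0) (hU : DifferentiableAt ℝ U p) :
    pda (expSubst δ U) p = exp (2 * δ * U p) * pda U p :=
  (((hasDerivAt_pda hU).const_mul (2 * δ)).exp.div_const (2 * δ)).deriv.trans (by field_simp)

theorem pdb_expSubst (hδ : δ ≠ 0) (hU : DifferentiableAt ℝ U p) :
    pdb (expSubst δ U) p = exp (2 * δ * U p) * pdb U p :=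
  (((hasDerivAt_pdb hU).const_mul (2 * δ)).exp.div_const (2 * δ)).deriv.trans (by field_simp)

theorem pda_pda_expSubst (hδ : δ ≠ 0) (hD : IsOpen D)
    (hU : ContDiffOn ℝ 2 U D) (hp : p ∈ D) :
    pda (pda (expSubst δ U)) p = exp (2 * δ * U p) * (2 * δ * pda U p ^ 2 + pda (pda U) p) := by
  have dU q (hq : q ∈ D) := differentiableAt_of_contDiffOn hD hU two_ne_zero hq
  have dUa :=
    differentiableAt_of_contDiffOn hD (contDiffOn_pda hD hU (by norm_num)) one_ne_zero hp
  rw [pda_of_eqOn_exp_mul hD hp (fun q hq => pda_expSubst hδ (dU q hq)) (dU p hp)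
    (hasDerivAt_pda dUa)]
  ring

theorem pdb_pda_expSubst (hδ : δ ≠ 0) (hD : IsOpen D)
    (hU : ContDiffOn ℝ 2 U D) (hp : p ∈ D) :
    pdb (pda (expSubst δ U)) p =
      exp (2 * δ * U p) * (2 * δ * pda U p * pdb U p + pdb (pda U) p) := by
  have dU q (hq : q ∈ D) := differentiableAt_of_contDiffOn hD hU two_ne_zero hq
  have dUa :=
    differentiableAt_of_contDiffOn hD (contDiffOn_pda hD hU (by norm_num)) one_ne_zero hp
  rw [pdb_of_eqOn_exp_mul hD hp (fun q hq => pda_expSubst hδ (dU q hq)) (dU p hp)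
    (hasDerivAt_pdb dUa)]
  ring

theorem pdb_pdb_expSubst (hδ : δ ≠ 0) (hD : IsOpen D)
    (hU : ContDiffOn ℝ 2 U D) (hp : p ∈ D) :
    pdb (pdb (expSubst δ U)) p = exp (2 * δ * U p) * (2 * δ * pdb U p ^ 2 + pdb (pdb U) p) := by
  have dU q (hq : q ∈ D) := differentiableAt_of_contDiffOn hD hU two_ne_zero hq
  have dUb :=
    differentiableAt_of_contDiffOn hD (contDiffOn_pdb hD hU (by norm_num)) one_ne_zero hp
  rw [pdb_of_eqOn_exp_mul hD hp (fun q hq => pdb_expSubst hδ (dU q hq)) (dU p hp)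
    (hasDerivAt_pdb dUb)]
  ring

theorem pdb_pda_pda_expSubst (hδ : δ ≠ 0) (hD : IsOpen D)
    (hU : ContDiffOn ℝ 3 U D) (hp : p ∈ D) :
    pdb (pda (pda (expSubst δ U))) p = exp (2 * δ * U p) *
      (4 * δ ^ 2 * pda U p ^ 2 * pdb U p + 2 * δ * pda (pda U) p * pdb U p
        + 4 * δ * pda U p * pdb (pda U) p + pdb (pda (pda U)) p) := by
  have dU := differentiableAt_of_contDiffOn hD hU three_ne_zero hp
  have cUa := contDiffOn_pda (m := 2) hD hU (by norm_num)
  have dUa := differentiableAt_of_contDiffOn hD cUa two_ne_zero hp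
  have dUaa :=
    differentiableAt_of_contDiffOn hD (contDiffOn_pda hD cUa (by norm_num)) one_ne_zero hp
  rw [pdb_of_eqOn_exp_mul hD hp
    (fun q hq => pda_pda_expSubst hδ hD (hU.of_le (by norm_num)) hq) dU
    ((((hasDerivAt_pdb dUa).fun_pow 2).const_mul (2 * δ)).add (hasDerivAt_pdb dUaa))]
  ring

theorem pdb_pdb_pda_expSubst (hδ : δ ≠ 0) (hD : IsOpen D)
    (hU : ContDiffOn ℝ 3 U D) (hp : p ∈ D) :
    pdb (pdb (pda (expSubst δ U))) p = exp (2 * δ * U p) *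
      (4 * δ ^ 2 * pda U p * pdb U p ^ 2 + 4 * δ * pdb U p * pdb (pda U) p
        + 2 * δ * pda U p * pdb (pdb U) p + pdb (pdb (pda U)) p) := by
  have dU := differentiableAt_of_contDiffOn hD hU three_ne_zero hp
  have cUa := contDiffOn_pda (m := 2) hD hU (by norm_num)
  have dUa := differentiableAt_of_contDiffOn hD cUa two_ne_zero hp
  have dUb :=
    differentiableAt_of_contDiffOn hD (contDiffOn_pdb hD hU (by norm_num)) two_ne_zero hp
  have dUab :=
    differentiableAt_of_contDiffOn hD (contDiffOn_pdb hD cUa (by norm_num)) one_ne_zero hp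
  rw [pdb_of_eqOn_exp_mul hD hp
    (fun q hq => pdb_pda_expSubst hδ hD (hU.of_le (by norm_num)) hq) dU
    ((((hasDerivAt_pdb dUa).const_mul (2 * δ)).mul (hasDerivAt_pdb dUb)).add
      (hasDerivAt_pdb dUab))]
  ring

theorem pdb_pdb_pda_pda_expSubst (hδ : δ ≠ 0) (hD : IsOpen D)
    (hU : ContDiffOn ℝ 4 U D) (hp : p ∈ D) :
    pdb (pdb (pda (pda (expSubst δ U)))) p = exp (2 * δ * U p) *
      (8 * δ ^ 3 * pda U p ^ 2 * pdb U p ^ 2 + 4 * δ ^ 2 * pda (pda U) p * pdb U p ^ 2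
        + 16 * δ ^ 2 * pda U p * pdb U p * pdb (pda U) p
        + 4 * δ ^ 2 * pda U p ^ 2 * pdb (pdb U) p
        + 4 * δ * pdb U p * pdb (pda (pda U)) p + 2 * δ * pda (pda U) p * pdb (pdb U) p
        + 4 * δ * pdb (pda U) p ^ 2 + 4 * δ * pda U p * pdb (pdb (pda U)) p
        + pdb (pdb (pda (pda U))) p) := by
  have dU := differentiableAt_of_contDiffOn hD hU four_ne_zero hp
  have cUa := contDiffOn_pda (m := 3) hD hU (by norm_num)
  have cUaa := contDiffOn_pda (m := 2) hD cUa (by norm_num)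
  have dUa := differentiableAt_of_contDiffOn hD cUa three_ne_zero hp
  have dUb :=
    differentiableAt_of_contDiffOn hD (contDiffOn_pdb hD hU (by norm_num)) three_ne_zero hp
  have dUaa := differentiableAt_of_contDiffOn hD cUaa two_ne_zero hp
  have dUab :=
    differentiableAt_of_contDiffOn hD (contDiffOn_pdb hD cUa (by norm_num)) two_ne_zero hp
  have dUaab :=
    differentiableAt_of_contDiffOn hD (contDiffOn_pdb hD cUaa (by norm_num)) one_ne_zero hp
  have hUa := hasDerivAt_pdb dUa
  have hUb := hasDerivAt_pdb dUb
  rw [pdb_of_eqOn_exp_mul hD hp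
    (fun q hq => pdb_pda_pda_expSubst hδ hD (hU.of_le (by norm_num)) hq) dU
    ((((((hUa.fun_pow 2).const_mul (4 * δ ^ 2)).mul hUb).add
      (((hasDerivAt_pdb dUaa).const_mul (2 * δ)).mul hUb)).add
      ((hUa.const_mul (4 * δ)).mul (hasDerivAt_pdb dUab))).add (hasDerivAt_pdb dUaab))]
  ring

end ExpSubst

theorem Rexpr_expSubst (n m : ℤ) {δ : ℝ} (hδ : δ ≠ 0) {U : ℝ × ℝ → ℝ} {D : Set (ℝ × ℝ)}
    (hD : IsOpen D) (hU : ContDiffOn ℝ 4 U D) {p : ℝ × ℝ} (hp : p ∈ D) (hαβ : p.1 ≠ p.2)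
    (hUa : pda U p ≠ 0) (hUb : pdb U p ≠ 0) :
    Rexpr n m (expSubst δ U) p = exp (2 * δ * U p) * (Rexpr n m U p + 2 * δ ^ 2 * pda U p *
      pdb U p * (2 * pdb (pda U) p - (pda U p - pdb U p) / (p.1 - p.2))) := by
  have dU := differentiableAt_of_contDiffOn hD hU four_ne_zero hp
  have hU2 : ContDiffOn ℝ 2 U D := hU.of_le (by norm_num)
  have hU3 : ContDiffOn ℝ 3 U D := hU.of_le (by norm_num)
  rw [Rexpr_eq_rpde, Rexpr_eq_rpde, pda_expSubst hδ dU, pdb_expSubst hδ dU,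
    pda_pda_expSubst hδ hD hU2 hp, pdb_pda_expSubst hδ hD hU2 hp, pdb_pdb_expSubst hδ hD hU2 hp,
    pdb_pda_pda_expSubst hδ hD hU3 hp, pdb_pdb_pda_expSubst hδ hD hU3 hp,
    pdb_pdb_pda_pda_expSubst hδ hD hU hp, rpde_mul n m (exp_ne_zero _),
    rpde_exp_shift n m δ (sub_ne_zero.mpr hαβ) hUa hUb]

/-- Equivalence of the δ-RPDE with the RPDE under the exponential substitution
Ũ = exp(2δU)/(2δ). -/
theorem deltaRPDE_iff_RPDE_exp
    (n m : ℤ) (δ : ℝ) (hδ : δ ≠ 0) (U : ℝ × ℝ → ℝ)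
    (D : Set (ℝ × ℝ)) (hD : IsOpen D)
    (hαβ : ∀ p ∈ D, p.1 ≠ p.2)
    (hUa : ∀ p ∈ D, pda U p ≠ 0) (hUb : ∀ p ∈ D, pdb U p ≠ 0)
    (hU : ContDiffOn ℝ 4 U D) :
    (∀ p ∈ D, Rexpr n m U p + 2 * δ ^ 2 * pda U p * pdb U p *
        (2 * pdb (pda U) p - (pda U p - pdb U p) / (p.1 - p.2)) = 0) ↔
    (∀ p ∈ D, Rexpr n m (fun q => Real.exp (2 * δ * U q) / (2 * δ)) p = 0) := by
  refine forall₂_congr fun p hp => ?_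
  rw [show (fun q => Real.exp (2 * δ * U q) / (2 * δ)) = expSubst δ U from rfl,
    Rexpr_expSubst n m hδ hD hU hp (hαβ p hp) (hUa p hp) (hUb p hp), mul_eq_zero,
    or_iff_right (exp_ne_zero _)]
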